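/- arXiv:math/0211398 — 3 statements merged into one kernel-verified Lean document; each statement's English description precedes it below -/
import Mathlib

section
/- For infinite cardinals κ ≤ λ, the cardinal λ^κ equals 2^κ + cf([λ]^κ, ⊆), where cf([λ]^κ, ⊆) is the cofinality of the partial order of subsets of λ of cardinality at most κ ordered by inclusion. -/
/-!
Every `f : κ → λ` has range of size at most `κ`, so it lands in some member `t` of a cofinal
family `Q`, and there are at most `|t| ^ κ ≤ κ ^ κ = 2 ^ κ` functions into a fixed `t`; hence
`λ ^ κ ≤ |Q| · 2 ^ κ`. Conversely the ranges of all functions `κ → λ` form a cofinal family, so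
the cofinality is at most `λ ^ κ`, and `2 ^ κ ≤ λ ^ κ` is clear.
-/

open Cardinal

/-- The cofinality of the partial order `([A]^{≤κ}, ⊆)` of subsets of `α` of
cardinality at most `κ`, ordered by inclusion: the least cardinality of a family `Q`
of such subsets such that every such subset is contained in a member of `Q`. -/
noncomputable def subsetsCof (α : Type*) (κ : Cardinal) : Cardinal :=
  sInf { c | ∃ Q : Set (Set α), (∀ s ∈ Q, #s ≤ κ) ∧ #Q = c ∧
      ∀ s : Set α, #s ≤ κ → ∃ t ∈ Q, s ⊆ t }

universe u

theorem exists_subset_range_of_mk_le {α β : Type u} [Nonempty α] {s : Set α} (hs : #s ≤ #β) :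
    ∃ f : β → α, s ⊆ Set.range f := by
  rcases s.eq_empty_or_nonempty with rfl | hne
  · exact ⟨fun _ => Classical.arbitrary α, Set.empty_subset _⟩
  · have : Nonempty s := hne.to_subtype
    obtain ⟨g, hg⟩ := Function.exists_surjective_iff.mpr ⟨inferInstance, (le_def _ _).mp hs⟩
    refine ⟨Subtype.val ∘ g, ?_⟩
    rw [Set.range_comp, hg.range_eq, Set.image_univ, Subtype.range_coe]

theorem exists_cofinal_family_mk_eq_subsetsCof (α : Type u) (κ : Cardinal) :
    ∃ Q : Set (Set α), (∀ s ∈ Q, #s ≤ κ) ∧ #Q = subsetsCof α κ ∧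
      ∀ s : Set α, #s ≤ κ → ∃ t ∈ Q, s ⊆ t := by
  refine csInf_mem (s := {c | ∃ Q : Set (Set α), (∀ s ∈ Q, #s ≤ κ) ∧ #Q = c ∧
    ∀ s : Set α, #s ≤ κ → ∃ t ∈ Q, s ⊆ t}) ?_
  exact ⟨_, {s | #s ≤ κ}, fun _ => id, rfl, fun s hs => ⟨s, hs, subset_rfl⟩⟩

theorem subsetsCof_le_power (α : Type u) [Nonempty α] (κ : Cardinal) :
    subsetsCof α κ ≤ #α ^ κ := by
  let Q : Set (Set α) := Set.range fun f : κ.out → α => Set.range f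
  have hQ_le : ∀ s ∈ Q, #s ≤ κ := by
    rintro _ ⟨f, rfl⟩
    exact mk_range_le.trans (mk_out κ).le
  have hQ_cofinal : ∀ s : Set α, #s ≤ κ → ∃ t ∈ Q, s ⊆ t := fun s hs => by
    obtain ⟨f, hf⟩ := exists_subset_range_of_mk_le (hs.trans_eq (mk_out κ).symm)
    exact ⟨_, ⟨f, rfl⟩, hf⟩
  calc subsetsCof α κ ≤ #Q := csInf_le' ⟨Q, hQ_le, rfl, hQ_cofinal⟩
    _ ≤ #(κ.out → α) := mk_range_le
    _ = #α ^ κ := by rw [← power_def, mk_out]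

theorem power_le_subsetsCof_mul (α : Type u) (κ : Cardinal) :
    #α ^ κ ≤ subsetsCof α κ * κ ^ κ := by
  obtain ⟨Q, hQ_le, hQ_card, hQ_cofinal⟩ := exists_cofinal_family_mk_eq_subsetsCof α κ
  choose T hTQ hTsub using fun f : κ.out → α => hQ_cofinal _ (mk_range_le.trans (mk_out κ).le)
  let Φ : (κ.out → α) → (t : Q) × (κ.out → (t : Set α)) := fun f =>
    ⟨⟨T f, hTQ f⟩, fun i => ⟨f i, hTsub f ⟨i, rfl⟩⟩⟩
  have hΦ : Function.Injective Φ := fun f g h => funext fun i => by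
    change ((Φ f).2 i : α) = ((Φ g).2 i : α)
    rw [h]
  calc #α ^ κ = #(κ.out → α) := by rw [← power_def, mk_out]
    _ ≤ #((t : Q) × (κ.out → (t : Set α))) := mk_le_of_injective hΦ
    _ = sum fun t : Q => #(t : Set α) ^ κ := by simp only [mk_sigma, ← power_def, mk_out]
    _ ≤ sum fun _ : Q => κ ^ κ := sum_le_sum _ _ fun t => power_le_power_right (hQ_le t t.2)
    _ = subsetsCof α κ * κ ^ κ := by rw [sum_const', hQ_card]

theorem stmt_6 (κ l : Cardinal) (hκ : aleph0 ≤ κ) (hκl : κ ≤ l) :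
    l ^ κ = 2 ^ κ + subsetsCof l.out κ := by
  have hl : ℵ₀ ≤ l := hκ.trans hκl
  have : Nonempty l.out := mk_ne_zero_iff.mp ((mk_out l).trans_ne (aleph0_pos.trans_le hl).ne')
  have h2κ : ℵ₀ ≤ 2 ^ κ := hκ.trans (cantor κ).le
  have h2κ_le : 2 ^ κ ≤ l ^ κ := power_le_power_right ((natCast_le_aleph0 (n := 2)).trans hl)
  have hcof_le : subsetsCof l.out κ ≤ l ^ κ :=
    (subsetsCof_le_power l.out κ).trans_eq (by rw [mk_out])
  rw [add_eq_max h2κ]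
  refine le_antisymm ?_ (max_le h2κ_le hcof_le)
  calc l ^ κ = #l.out ^ κ := by rw [mk_out]
    _ ≤ subsetsCof l.out κ * κ ^ κ := power_le_subsetsCof_mul _ _
    _ = subsetsCof l.out κ * 2 ^ κ := by rw [power_self_eq hκ]
    _ ≤ max (subsetsCof l.out κ) (2 ^ κ) := mul_le_max_of_aleph0_le_right h2κ
    _ = max (2 ^ κ) (subsetsCof l.out κ) := max_comm _ _
end

section
/- For any finite coloring of the natural numbers, there exists an infinite set H of natural numbers such that all finite nonempty sums of distinct elements of H have the same color (Hindman's theorem). -/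
/-!
By the strong form of Hindman's theorem (proved in Mathlib with idempotent ultrafilters), one
colour class of the positive integers contains `FS b` for a stream `b` of positive integers.
The terms of `b` may repeat, so `H` is taken to be the set of sums of `b` over the consecutive
blocks `[j², (j+1)²)`: these block sums are unbounded, and a sum of finitely many of them is a
sum of `b` over a finite union of disjoint blocks, hence lies in `FS b`.
-/

open Finset Function Hindman

theorem Hindman.pos_of_mem_FS {a : Stream' ℕ} (ha : ∀ n, 0 < a.get n) {m : ℕ} (hm : m ∈ FS a) :
    0 < m := by
  induction hm with
  | head' a => exact ha 0
  | tail' a m _ ih => exact ih fun n => ha (n + 1)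
  | cons' a m _ ih => exact Nat.add_pos_right _ (ih fun n => ha (n + 1))

theorem Hindman.FS.sum_blockSum_mem {M : Type*} [AddCommMonoid M] (a : Stream' M)
    {B : ℕ → Finset ℕ} (hB : ∀ j, (B j).Nonempty) (hdisj : Pairwise (Disjoint on B))
    {s : Finset ℕ} (hs : s.Nonempty) : ∑ j ∈ s, ∑ i ∈ B j, a.get i ∈ FS a := by
  classical
  rw [← sum_biUnion (hdisj.set_pairwise _)]
  exact FS.finsetSum a _ (hs.biUnion fun j _ => hB j)

theorem Finset.sum_mem_of_subset_range {ι M : Type*} [AddCommMonoid M] [DecidableEq M]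
    {f : ι → M} {S : Set M} (hf : ∀ t : Finset ι, t.Nonempty → ∑ j ∈ t, f j ∈ S)
    {s : Finset M} (hs : s.Nonempty) (hsf : ↑s ⊆ Set.range f) : ∑ m ∈ s, m ∈ S := by
  obtain ⟨t, -, hinj, rfl⟩ :=
    s.exists_subset_injOn_image_eq_of_surjOn Set.univ (by simpa [Set.SurjOn] using hsf)
  rw [sum_image hinj]
  exact hf t (image_nonempty.mp hs)

theorem Hindman.exists_infinite_forall_sum_mem_FS {b : Stream' ℕ} (hb : ∀ n, 0 < b.get n) :
    ∃ H : Set ℕ, H.Infinite ∧ ∀ s : Finset ℕ, s.Nonempty → ↑s ⊆ H → ∑ n ∈ s, n ∈ FS b := by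
  set B : ℕ → Finset ℕ := fun j => Ico (j ^ 2) ((j + 1) ^ 2)
  have hcard : ∀ j, j < #(B j) := fun j => by
    simp only [B, Nat.card_Ico]
    have : (j + 1) ^ 2 = j ^ 2 + 2 * j + 1 := by ring
    omega
  have hdisj : Pairwise (Disjoint on B) := fun i j hij => by
    rw [onFun, ← disjoint_coe]
    have hsq : Monotone fun j : ℕ => j ^ 2 := pow_left_mono 2
    simpa [B] using hsq.pairwise_disjoint_on_Ico_succ hij
  refine ⟨Set.range fun j => ∑ i ∈ B j, b.get i, Set.infinite_of_forall_exists_gt fun j => ?_,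
    fun s hs hsH => sum_mem_of_subset_range
      (fun t ht => FS.sum_blockSum_mem b (fun j => card_pos.mp (hcard j).pos) hdisj ht) hs hsH⟩
  refine ⟨_, Set.mem_range_self j, (hcard j).trans_le ?_⟩
  simpa using card_nsmul_le_sum (B j) b.get 1 fun i _ => hb i

theorem stmt_8 (k : ℕ) (c : ℕ → Fin k) :
    ∃ (H : Set ℕ) (i : Fin k), H.Infinite ∧
      ∀ s : Finset ℕ, s.Nonempty → ↑s ⊆ H → c (∑ n ∈ s, n) = i := by
  have hcover : FS (fun n => n + 1 : Stream' ℕ) ⊆ ⋃₀ Set.range fun i => {m | 0 < m ∧ c m = i} :=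
    fun m hm => Set.mem_sUnion.mpr
      ⟨_, Set.mem_range_self (c m), pos_of_mem_FS (fun n => Nat.succ_pos n) hm, rfl⟩
  obtain ⟨_, ⟨i, rfl⟩, b, hb⟩ := FS_partition_regular _ _ (Set.finite_range _) hcover
  obtain ⟨H, hH, hsum⟩ :=
    exists_infinite_forall_sum_mem_FS fun n => (hb (FS.singleton b n)).1
  exact ⟨H, i, hH, fun s hs hsH => (hb (hsum s hs hsH)).2⟩
end

section
/- Every analytic set of real numbers (the continuous image of a Borel subset of a Polish space) is Lebesgue measurable. -/
/-!
Capacitability argument. Write the analytic set as `range f` with `f : (ℕ → ℕ) → X` continuous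
and fix `ε > 0`. Since `range f` is the increasing union of the images of the sets
`{y | y 0 ≤ n}`, and outer measure is continuous along increasing unions, one can choose bounds
`x 0, x 1, …` one coordinate at a time so that every image `f '' {y | ∀ i < k, y i ≤ x i}` still
has measure `> μ (range f) - ε`. The closures of these images decrease to the compact set
`f '' {y | ∀ i, y i ≤ x i}`, which therefore has measure `≥ μ (range f) - ε`. So `range f` is
squeezed between a σ-compact set and a measurable hull of the same finite measure. An s-finite
measure has the same null sets as a finite one, which gives the general case.
-/

open MeasureTheory Set Filter Topology ENNReal

theorem exists_mapClusterPt_of_mem_pi_Iio {x : ℕ → ℕ} {y : ℕ → ℕ → ℕ}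
    (hy : ∀ k, y k ∈ (Iio k).pi fun i => Iic (x i)) :
    ∃ p ∈ univ.pi fun i => Iic (x i), MapClusterPt p atTop y := by
  -- only the finitely many terms `y k` with `k ≤ i` can exceed `x i` in coordinate `i`
  let M : ℕ → ℕ := fun i => max (x i) ((Finset.range (i + 1)).sup fun k => y k i)
  have hyM : ∀ k, y k ∈ univ.pi fun i => Iic (M i) := by
    intro k i _
    rcases lt_or_ge i k with hik | hki
    · exact le_max_of_le_left (show y k i ≤ x i from hy k i hik)
    · exact le_max_of_le_right
        (Finset.le_sup (f := fun k => y k i) (Finset.mem_range.2 (Nat.lt_succ_of_le hki)))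
  obtain ⟨p, -, hp⟩ := (isCompact_univ_pi fun i => (finite_Iic (M i)).isCompact).exists_mapClusterPt
    (f := atTop) (tendsto_principal.2 (Eventually.of_forall hyM))
  refine ⟨p, fun i _ => ?_, hp⟩
  have hmem : (Iio (i + 1)).pi (fun j => Iic (x j)) ∈ map y atTop :=
    (eventually_ge_atTop (i + 1)).mono fun k hk j hj => hy k j (lt_of_lt_of_le hj hk)
  have hclosed : IsClosed ((Iio (i + 1)).pi fun j => Iic (x j)) :=
    isClosed_set_pi fun j _ => isClosed_Iic
  have hpi := hp.mem_closure_of_mem _ hmem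
  rw [hclosed.closure_eq] at hpi
  exact hpi i (Nat.lt_succ_self i)

theorem exists_pi_Iio_subset_of_isOpen {x : ℕ → ℕ} {U : Set (ℕ → ℕ)} (hU : IsOpen U)
    (hxU : (univ.pi fun i => Iic (x i)) ⊆ U) :
    ∃ k, ((Iio k).pi fun i => Iic (x i)) ⊆ U := by
  by_contra! h
  choose y hy hyU using fun k => not_subset.1 (h k)
  obtain ⟨p, hpx, hp⟩ := exists_mapClusterPt_of_mem_pi_Iio hy
  have hpU := hp.mem_closure_of_mem Uᶜ (mem_map.2 (univ_mem' hyU))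
  rw [hU.isClosed_compl.closure_eq] at hpU
  exact hpU (hxU hpx)

theorem iInter_closure_image_pi_Iio_subset {X : Type*} [TopologicalSpace X] [T2Space X]
    {f : (ℕ → ℕ) → X} (hf : Continuous f) (x : ℕ → ℕ) :
    ⋂ k, closure (f '' (Iio k).pi fun i => Iic (x i)) ⊆ f '' univ.pi fun i => Iic (x i) := by
  intro z hz
  by_contra hzK
  obtain ⟨W, V, hW, hV, hKW, hzV, hWV⟩ :=
    ((isCompact_univ_pi fun i => (finite_Iic (x i)).isCompact).image hf).separation_of_notMem hzK
  obtain ⟨k, hk⟩ := exists_pi_Iio_subset_of_isOpen (hW.preimage hf) (image_subset_iff.1 hKW)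
  have hclosure : closure (f '' (Iio k).pi fun i => Iic (x i)) ⊆ Vᶜ :=
    closure_minimal ((image_subset_iff.2 hk).trans hWV.subset_compl_right) hV.isClosed_compl
  exact hclosure (mem_iInter.1 hz k) hzV

theorem exists_lt_measure_image_inter_add {α X : Type*} [MeasurableSpace X] (μ : Measure X)
    (f : α → X) (D : Set α) (g : α → ℕ) {c ε : ℝ≥0∞} (h : c < μ (f '' D) + ε) :
    ∃ n, c < μ (f '' (D ∩ {a | g a ≤ n})) + ε := by
  have hmono : Monotone fun n => f '' (D ∩ {a | g a ≤ n}) := fun m n hmn =>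
    image_mono (inter_subset_inter_right _ fun a ha => le_trans ha hmn)
  have hunion : ⋃ n, f '' (D ∩ {a | g a ≤ n}) = f '' D := by
    rw [← image_iUnion, ← inter_iUnion,
      iUnion_eq_univ_iff.2 fun a => ⟨g a, show g a ≤ g a from le_rfl⟩, inter_univ]
  have hlim := (tendsto_measure_iUnion_atTop (μ := μ) hmono).add (tendsto_const_nhds (x := ε))
  rw [hunion] at hlim
  exact (hlim.eventually_const_lt h).exists

section Capacitability

variable {X : Type*} [TopologicalSpace X] [T2Space X] [MeasurableSpace X] [OpensMeasurableSpace X]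

theorem exists_isCompact_subset_range_measure_le_add (μ : Measure X) [IsFiniteMeasure μ]
    {f : (ℕ → ℕ) → X} (hf : Continuous f) {ε : ℝ≥0∞} (hε : ε ≠ 0) :
    ∃ K, IsCompact K ∧ K ⊆ range f ∧ μ (range f) ≤ μ K + ε := by
  let P : Set (ℕ → ℕ) → Prop := fun D => μ (range f) < μ (f '' D) + ε
  have hstep : ∀ (k : ℕ) (D : Set (ℕ → ℕ)), ∃ n, P D → P (D ∩ {y | y k ≤ n}) := by
    intro k D
    by_cases hD : P D
    · obtain ⟨n, hn⟩ := exists_lt_measure_image_inter_add μ f D (fun y => y k) hD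
      exact ⟨n, fun _ => hn⟩
    · exact ⟨0, fun h => absurd h hD⟩
  choose N hN using hstep
  let D : ℕ → Set (ℕ → ℕ) := fun k => Nat.rec univ (fun k Dk => Dk ∩ {y | y k ≤ N k Dk}) k
  let x : ℕ → ℕ := fun k => N k (D k)
  have hDx : ∀ k, D k = (Iio k).pi fun i => Iic (x i) := by
    intro k
    induction k with
    | zero => simp [D]
    | succ k ih =>
      change D k ∩ {y | y k ≤ x k} = _
      ext y
      simp only [ih, mem_inter_iff, Set.mem_pi, mem_Iio, mem_Iic, mem_ofPred_eq,
        Nat.forall_lt_succ_right]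
  have hP : ∀ k, P (D k) := by
    intro k
    induction k with
    | zero => simpa [P, D, image_univ] using ENNReal.lt_add_right (measure_ne_top μ _) hε
    | succ k ih => exact hN k (D k) ih
  have hanti : Antitone fun k => closure (f '' D k) :=
    antitone_nat_of_succ_le fun k => closure_mono (image_mono inter_subset_left)
  refine ⟨f '' univ.pi fun i => Iic (x i),
    (isCompact_univ_pi fun i => (finite_Iic (x i)).isCompact).image hf, image_subset_range _ _, ?_⟩
  calc μ (range f) ≤ (⨅ k, μ (closure (f '' D k))) + ε := by
        rw [ENNReal.iInf_add]
        exact le_iInf fun k => (hP k).le.trans (by gcongr; exact subset_closure)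
    _ = μ (⋂ k, closure (f '' D k)) + ε := by
        rw [hanti.measure_iInter (fun k => isClosed_closure.nullMeasurableSet)
          ⟨0, measure_ne_top μ _⟩]
    _ ≤ μ (f '' univ.pi fun i => Iic (x i)) + ε := by
        gcongr
        simp only [hDx]
        exact iInter_closure_image_pi_Iio_subset hf x

theorem nullMeasurableSet_range_of_continuous (μ : Measure X) [IsFiniteMeasure μ]
    {f : (ℕ → ℕ) → X} (hf : Continuous f) : NullMeasurableSet (range f) μ := by
  choose K hK hKf hμK using fun n : ℕ =>
    exists_isCompact_subset_range_measure_le_add μ hf (ENNReal.inv_ne_zero.2 (natCast_ne_top n))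
  have hKmeas : MeasurableSet (⋃ n, K n) := .iUnion fun n => (hK n).measurableSet
  have hμ : μ (range f) ≤ μ (⋃ n, K n) :=
    ge_of_tendsto' (by simpa using tendsto_const_nhds.add ENNReal.tendsto_inv_nat_nhds_zero)
      fun n => (hμK n).trans (by gcongr; exact subset_iUnion K n)
  exact hKmeas.nullMeasurableSet.congr
    (ae_eq_of_subset_of_measure_ge (iUnion_subset hKf) hμ hKmeas.nullMeasurableSet
      (measure_ne_top μ _))

theorem MeasureTheory.AnalyticSet.nullMeasurableSet {s : Set X} (hs : AnalyticSet s) (μ : Measure X)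
    [SFinite μ] : NullMeasurableSet s μ := by
  rw [AnalyticSet] at hs
  rcases hs with rfl | ⟨f, hf, rfl⟩
  · exact nullMeasurableSet_empty
  · exact (nullMeasurableSet_range_of_continuous μ.toFinite hf).mono_ac
      (absolutelyContinuous_toFinite μ)

end Capacitability

theorem stmt_14 (s : Set ℝ) (hs : AnalyticSet s) :
    NullMeasurableSet s (volume : Measure ℝ) :=
  hs.nullMeasurableSet volume
end
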